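/- For sample sizes n_g, n_m > 0 and shift strength s := Σ^W_{mm}/K ≥ 0, define the pooled expected excess risk E_pool(n_g, n_m) = (s · n_m²/(n_m+n_g)² + 1/(n_g+n_m)) · |L| · σ², and the local-only excess risk E_loc(n_g) = (1/n_g) · |L| · σ², where |L| > 0 and σ² > 0. Then E_pool(n_g, n_m) − E_loc(n_g) = |L|·σ² · ( s·n_m²/(n_m+n_g)² − n_m/(n_g(n_g+n_m)) ), and hence pooling strictly helps, i.e. E_pool(n_g, n_m) < E_loc(n_g), if and only if s < (n_g + n_m)/(n_g · n_m). -/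

import Mathlib

/-- Pooled vs local excess risk: the exact difference identity and the threshold
`s < (n_g + n_m)/(n_g · n_m)` for pooling to strictly help. -/
theorem pooling_helps_iff_shift_small (ng nm s L σ2 : ℝ)
    (hg : 0 < ng) (hm : 0 < nm) (hs : 0 ≤ s) (hL : 0 < L) (hσ : 0 < σ2) :
    ((s * nm ^ 2 / (nm + ng) ^ 2 + 1 / (ng + nm)) * L * σ2 - (1 / ng) * L * σ2
        = L * σ2 * (s * nm ^ 2 / (nm + ng) ^ 2 - nm / (ng * (ng + nm)))) ∧
    ((s * nm ^ 2 / (nm + ng) ^ 2 + 1 / (ng + nm)) * L * σ2 < (1 / ng) * L * σ2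
        ↔ s < (ng + nm) / (ng * nm)) := by
  have hsum : (0:ℝ) < ng + nm := by linarith
  have hsum' : (0:ℝ) < nm + ng := by linarith
  constructor
  · field_simp
    ring
  · rw [mul_lt_mul_iff_left₀ hσ, mul_lt_mul_iff_left₀ hL, lt_div_iff₀ (mul_pos hg hm),
      div_add_div _ _ (by positivity : (nm+ng)^2 ≠ 0) (ne_of_gt hsum),
      div_lt_div_iff₀ (by positivity) hg]
    constructor <;> intro h <;> nlinarith [sq_nonneg (nm + ng), mul_pos hg hm, sq_nonneg nm]
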